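/- Let b : Fin n → ℕ be a monotone function. Suppose l * u * k = l' * u' * k' in GL n F, where l and l' are block diagonal (l i j = 0 and l' i j = 0 whenever b i ≠ b j), u and u' are block upper-triangular unipotent (u i j = 0 whenever b i > b j, u i i = 1, u i j = 0 whenever b i = b j and i ≠ j, and likewise for u'), and k, k' lie in GL n O. Then every entry of the matrix l'⁻¹ * l and every entry of its inverse l⁻¹ * l' lies in O. Consequently the map sending g = l u k to the coset of l is a well-defined surjection from GL n F modulo GL n O to the block-diagonal subgroup modulo its O-points. (Lemma 12, well-definedness of Φ^G_L.) -/

import Mathlib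

/- Setting: `F = 𝔽q((X))` is the field of formal Laurent series over a finite field `𝔽q`,
with valuation `v = Valued.v : F → ℤₘ₀` (normalized by `v X = ofAdd (-1)`), ring of
integers `O = 𝔽q[[X]] = {f | v f ≤ 1}`. -/

open scoped Multiplicative
open scoped WithZero

noncomputable section

variable (𝔽q : Type*) [Field 𝔽q] [Fintype 𝔽q]

/-- `F = 𝔽q((X))`, the field of formal Laurent series over `𝔽q`. -/
abbrev F : Type _ := LaurentSeries 𝔽q

/-- The uniformizer `X` of `F`. -/
def XX : F 𝔽q := ((PowerSeries.X : PowerSeries 𝔽q) : LaurentSeries 𝔽q)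

/-- The sup-norm `‖x‖ = sup_i v (x i)` of a row vector over `F`. -/
def vnorm {n : ℕ} (x : Fin n → F 𝔽q) : ℤᵐ⁰ :=
  Finset.univ.sup fun i => Valued.v (x i)

/-- `f` lies in the ring of integers `O = 𝔽q[[X]]` iff `v f ≤ 1`. -/
def inO (f : F 𝔽q) : Prop := Valued.v f ≤ 1

/-- `f` lies in `R = 𝔽q[X⁻¹]`: a Laurent series with finite support contained in
nonpositive degrees. -/
def inR (f : F 𝔽q) : Prop := f.support.Finite ∧ ∀ d ∈ f.support, d ≤ 0

/-- `g ∈ GL n F` lies in `GL n O`: every entry of `g` and of `g⁻¹` lies in `O`. -/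
def inGLO {n : ℕ} (g : GL (Fin n) (F 𝔽q)) : Prop :=
  (∀ i j, inO 𝔽q ((g : Matrix (Fin n) (Fin n) (F 𝔽q)) i j)) ∧
  (∀ i j, inO 𝔽q ((↑(g⁻¹) : Matrix (Fin n) (Fin n) (F 𝔽q)) i j))

/-- `γ ∈ GL n F` lies in `GL n R`: every entry of `γ` and of `γ⁻¹` lies in `R`. -/
def inGLR {n : ℕ} (γ : GL (Fin n) (F 𝔽q)) : Prop :=
  (∀ i j, inR 𝔽q ((γ : Matrix (Fin n) (Fin n) (F 𝔽q)) i j)) ∧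
  (∀ i j, inR 𝔽q ((↑(γ⁻¹) : Matrix (Fin n) (Fin n) (F 𝔽q)) i j))

/- Writing `m = l'⁻¹ l`, the hypothesis gives `u'⁻¹ m u = k' k⁻¹`, a matrix over `O`. Since `m`
is block diagonal and `u, u'` are block upper-triangular unipotent, multiplying `m` by them leaves
its diagonal blocks unchanged, so the diagonal blocks of `m` are over `O`; its other entries
vanish. -/

section BlockParabolic

variable {ι R α : Type*} [DecidableEq ι] [LinearOrder α] {b : ι → α}

section Semiring

variable [Semiring R]

variable (b) in
def IsBlockUnipotent (M : Matrix ι ι R) : Prop :=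
  M.BlockTriangular b ∧ ∀ i j, b i = b j → M i j = (1 : Matrix ι ι R) i j

theorem isBlockUnipotent_of_entries {M : Matrix ι ι R} (h₁ : ∀ i j, b j < b i → M i j = 0)
    (h₂ : ∀ i, M i i = 1) (h₃ : ∀ i j, b i = b j → i ≠ j → M i j = 0) :
    IsBlockUnipotent b M := by
  refine ⟨fun i j h => h₁ i j h, fun i j hij => ?_⟩
  by_cases h : i = j
  · rw [h, h₂, Matrix.one_apply_eq]
  · rw [h₃ i j hij h, Matrix.one_apply_ne h]

variable [Fintype ι]

theorem IsBlockUnipotent.mul_apply_of_eq {N A : Matrix ι ι R} (hN : IsBlockUnipotent b N)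
    (hA : A.BlockTriangular b) {i j : ι} (hij : b i = b j) : (N * A) i j = A i j := by
  rw [Matrix.mul_apply, Finset.sum_eq_single i]
  · rw [hN.2 i i rfl, Matrix.one_apply_eq, one_mul]
  · intro c _ hci
    rcases lt_trichotomy (b c) (b i) with h | h | h
    · rw [hN.1 h, zero_mul]
    · rw [hN.2 i c h.symm, Matrix.one_apply_ne (Ne.symm hci), zero_mul]
    · rw [hA (hij ▸ h), mul_zero]
  · exact fun h => absurd (Finset.mem_univ i) h

theorem IsBlockUnipotent.mul_apply_of_eq_right {A U : Matrix ι ι R} (hU : IsBlockUnipotent b U)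
    (hA : A.BlockTriangular b) {i j : ι} (hij : b i = b j) : (A * U) i j = A i j := by
  rw [Matrix.mul_apply, Finset.sum_eq_single j]
  · rw [hU.2 j j rfl, Matrix.one_apply_eq, mul_one]
  · intro c _ hcj
    rcases lt_trichotomy (b c) (b j) with h | h | h
    · rw [hA (hij ▸ h), zero_mul]
    · rw [hU.2 c j h, Matrix.one_apply_ne hcj, mul_zero]
    · rw [hU.1 h, mul_zero]
  · exact fun h => absurd (Finset.mem_univ j) h

theorem IsBlockUnipotent.mul_mul_apply_of_eq {N A U : Matrix ι ι R} (hN : IsBlockUnipotent b N)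
    (hU : IsBlockUnipotent b U) (hA : A.BlockTriangular b) {i j : ι} (hij : b i = b j) :
    (N * A * U) i j = A i j := by
  rw [Matrix.mul_assoc, hN.mul_apply_of_eq (hA.mul hU.1) hij, hU.mul_apply_of_eq_right hA hij]

end Semiring

variable [CommRing R] [Fintype ι]

variable (R b) in
def leviSubgroup : Subgroup (GL ι R) where
  carrier := {g | ∀ i j, b i ≠ b j → (g : Matrix ι ι R) i j = 0}
  one_mem' i j hij := Matrix.one_apply_ne fun h => hij (congrArg b h)
  mul_mem' {g h} hg hh i j hij := by
    change ((g : Matrix ι ι R) * h) i j = 0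
    rw [Matrix.mul_apply]
    refine Finset.sum_eq_zero fun c _ => ?_
    by_cases hic : b i = b c
    · rw [hh c j (hic ▸ hij), mul_zero]
    · rw [hg i c hic, zero_mul]
  inv_mem' {g} hg i j hij := by
    have hup : (g : Matrix ι ι R).BlockTriangular b := fun i j h => hg i j h.ne'
    have hlow : (g : Matrix ι ι R).BlockTriangular (OrderDual.toDual ∘ b) :=
      fun i j h => hg i j (ne_of_lt h)
    have := g.invertible
    change (↑(g⁻¹) : Matrix ι ι R) i j = 0
    rw [Matrix.coe_units_inv]
    rcases hij.lt_or_gt with h | h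
    · exact Matrix.blockTriangular_inv_of_blockTriangular hlow h
    · exact Matrix.blockTriangular_inv_of_blockTriangular hup h

theorem blockTriangular_of_mem_leviSubgroup {g : GL ι R} (hg : g ∈ leviSubgroup R b) :
    (g : Matrix ι ι R).BlockTriangular b :=
  fun i j h => hg i j h.ne'

theorem IsBlockUnipotent.inv {u : GL ι R} (hu : IsBlockUnipotent b (u : Matrix ι ι R)) :
    IsBlockUnipotent b (↑(u⁻¹) : Matrix ι ι R) := by
  have := u.invertible
  have hinv : (↑(u⁻¹) : Matrix ι ι R).BlockTriangular b := by
    rw [Matrix.coe_units_inv]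
    exact Matrix.blockTriangular_inv_of_blockTriangular hu.1
  refine ⟨hinv, fun i j hij => ?_⟩
  rw [← hu.mul_apply_of_eq hinv hij, ← Units.val_mul, mul_inv_cancel, Units.val_one]

theorem leviComponent_quotient_mem {S : Subring R} {l u k l' u' k' : GL ι R}
    (hl : l ∈ leviSubgroup R b) (hl' : l' ∈ leviSubgroup R b)
    (hu : IsBlockUnipotent b (u : Matrix ι ι R)) (hu' : IsBlockUnipotent b (u' : Matrix ι ι R))
    (hk : ∀ i j, (↑(k⁻¹) : Matrix ι ι R) i j ∈ S) (hk' : ∀ i j, (k' : Matrix ι ι R) i j ∈ S)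
    (heq : l * u * k = l' * u' * k') (i j : ι) :
    (↑(l'⁻¹ * l) : Matrix ι ι R) i j ∈ S := by
  have hm : l'⁻¹ * l ∈ leviSubgroup R b := mul_mem (inv_mem hl') hl
  have hconj : u'⁻¹ * (l'⁻¹ * l) * u = k' * k⁻¹ := by
    calc u'⁻¹ * (l'⁻¹ * l) * u = u'⁻¹ * l'⁻¹ * (l * u * k) * k⁻¹ := by group
      _ = k' * k⁻¹ := by rw [heq]; group
  by_cases hij : b i = b j
  · rw [← hu'.inv.mul_mul_apply_of_eq hu (blockTriangular_of_mem_leviSubgroup hm) hij,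
      ← Units.val_mul, ← Units.val_mul, hconj, Units.val_mul, Matrix.mul_apply]
    exact S.sum_mem fun c _ => S.mul_mem (hk' i c) (hk c j)
  · rw [hm i j hij]
    exact S.zero_mem

end BlockParabolic

theorem levi_component_well_defined (n : ℕ)
    (b : Fin n → ℕ) (l u k l' u' k' : GL (Fin n) (F 𝔽q))
    (hl : ∀ i j, b i ≠ b j → (l : Matrix (Fin n) (Fin n) (F 𝔽q)) i j = 0)
    (hl' : ∀ i j, b i ≠ b j → (l' : Matrix (Fin n) (Fin n) (F 𝔽q)) i j = 0)
    (hu₁ : ∀ i j, b j < b i → (u : Matrix (Fin n) (Fin n) (F 𝔽q)) i j = 0)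
    (hu₂ : ∀ i, (u : Matrix (Fin n) (Fin n) (F 𝔽q)) i i = 1)
    (hu₃ : ∀ i j, b i = b j → i ≠ j → (u : Matrix (Fin n) (Fin n) (F 𝔽q)) i j = 0)
    (hu'₁ : ∀ i j, b j < b i → (u' : Matrix (Fin n) (Fin n) (F 𝔽q)) i j = 0)
    (hu'₂ : ∀ i, (u' : Matrix (Fin n) (Fin n) (F 𝔽q)) i i = 1)
    (hu'₃ : ∀ i j, b i = b j → i ≠ j → (u' : Matrix (Fin n) (Fin n) (F 𝔽q)) i j = 0)
    (hk : inGLO 𝔽q k) (hk' : inGLO 𝔽q k')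
    (heq : l * u * k = l' * u' * k') :
    (∀ i j, inO 𝔽q ((↑(l'⁻¹ * l) : Matrix (Fin n) (Fin n) (F 𝔽q)) i j)) ∧
    (∀ i j, inO 𝔽q ((↑(l⁻¹ * l') : Matrix (Fin n) (Fin n) (F 𝔽q)) i j)) := by
  have hu := isBlockUnipotent_of_entries hu₁ hu₂ hu₃
  have hu' := isBlockUnipotent_of_entries hu'₁ hu'₂ hu'₃
  let O := (Valued.v : Valuation (F 𝔽q) ℤᵐ⁰).integer
  exact ⟨leviComponent_quotient_mem (S := O) hl hl' hu hu' hk.2 hk'.1 heq,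
    leviComponent_quotient_mem (S := O) hl' hl hu' hu hk'.2 hk.1 heq.symm⟩
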